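/- arXiv:1901.06853 — 4 statements merged into one kernel-verified Lean document; each statement's English description precedes it below -/
import Mathlib

section
/- Let M be a free abelian group and D(z) = Σ_{i≥0} D_i z^i a Hasse–Schmidt derivation on the exterior algebra ⋀M (i.e. D(z)(u∧v) = D(z)u ∧ D(z)v for all u,v ∈ ⋀M) with D_0 = id. Then the formal inverse of D(z) in End(⋀M)[[z]] exists and is again a Hasse–Schmidt derivation on ⋀M. -/
/-!
Extend `φ = ∑ φₙ Xⁿ ∈ End(A)⟦X⟧` `X`-linearly to an operator `φ̃` on `A⟦X⟧`. The map `φ ↦ φ̃`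
turns the Cauchy product into composition, and the Hasse–Schmidt property of `φ` says exactly
that `φ̃` is multiplicative. As `D₀ = 1`, `D` is a unit of `End(A)⟦X⟧`, so `D̃` is a bijection
whose inverse is the extension of `D⁻¹`, and the inverse of a multiplicative bijection is
multiplicative.
-/

noncomputable section

/-- `D` is a Hasse–Schmidt derivation on `⋀M`, given coefficientwise:
`D n (u ∧ v) = ∑_{j≤n} D j u ∧ D (n-j) v`. -/
def IsHS {M : Type*} [AddCommGroup M] [Module ℤ M]
    (D : ℕ → Module.End ℤ (ExteriorAlgebra ℤ M)) : Prop :=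
  ∀ (n : ℕ) (u w : ExteriorAlgebra ℤ M),
    D n (u * w) = ∑ j ∈ Finset.range (n + 1), D j u * D (n - j) w

open Finset

namespace PowerSeries

theorem coeff_mul_eq_sum_range {S : Type*} [Semiring S] (φ ψ : S⟦X⟧) (n : ℕ) :
    coeff n (φ * ψ) = ∑ j ∈ range (n + 1), coeff j φ * coeff (n - j) ψ := by
  rw [coeff_mul, Nat.sum_antidiagonal_eq_sum_range_succ_mk]

variable {R A : Type*} [Semiring R] [Semiring A] [Module R A]

/-- The `X`-linear extension to `A⟦X⟧` of `a ↦ ∑ₙ φₙ(a) Xⁿ`. -/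
def applyEnd (φ : (Module.End R A)⟦X⟧) (x : A⟦X⟧) : A⟦X⟧ :=
  mk fun n ↦ ∑ p ∈ antidiagonal n, coeff p.1 φ (coeff p.2 x)

@[simp]
theorem coeff_applyEnd (φ : (Module.End R A)⟦X⟧) (x : A⟦X⟧) (n : ℕ) :
    coeff n (applyEnd φ x) = ∑ p ∈ antidiagonal n, coeff p.1 φ (coeff p.2 x) :=
  coeff_mk _ _

theorem coeff_applyEnd_C (φ : (Module.End R A)⟦X⟧) (u : A) (n : ℕ) :
    coeff n (applyEnd φ (C u)) = coeff n φ u := by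
  rw [coeff_applyEnd, sum_eq_single (n, 0)] <;> aesop (add simp coeff_C)

theorem applyEnd_one (x : A⟦X⟧) : applyEnd (1 : (Module.End R A)⟦X⟧) x = x := by
  ext n
  rw [coeff_applyEnd, sum_eq_single (0, n)] <;> aesop (add simp coeff_one)

theorem applyEnd_applyEnd (φ ψ : (Module.End R A)⟦X⟧) (x : A⟦X⟧) :
    applyEnd φ (applyEnd ψ x) = applyEnd (φ * ψ) x := by
  ext n
  simp only [coeff_applyEnd, coeff_mul, map_sum, Module.End.mul_apply, LinearMap.sum_apply,
    sum_sigma']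
  apply sum_nbij' (fun ⟨⟨i, _⟩, ⟨k, l⟩⟩ ↦ ⟨(i + k, l), (i, k)⟩)
    (fun ⟨⟨_, j⟩, ⟨k, l⟩⟩ ↦ ⟨(k, l + j), (l, j)⟩) <;> aesop (add simp add_assoc)

def IsHasseSchmidt (φ : (Module.End R A)⟦X⟧) : Prop :=
  ∀ n u w, coeff n φ (u * w) = ∑ p ∈ antidiagonal n, coeff p.1 φ u * coeff p.2 φ w

theorem isHasseSchmidt_iff_applyEnd_mul {φ : (Module.End R A)⟦X⟧} :
    IsHasseSchmidt φ ↔ ∀ x y, applyEnd φ (x * y) = applyEnd φ x * applyEnd φ y := by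
  refine ⟨fun hφ x y ↦ ?_, fun h n u w ↦ ?_⟩
  · ext n
    simp only [coeff_applyEnd, coeff_mul, map_sum, hφ _ (coeff _ x), sum_mul_sum, sum_sigma']
    apply sum_nbij' (fun ⟨⟨_, _⟩, ⟨⟨a, b⟩, ⟨p, q⟩⟩⟩ ↦ ⟨(p + a, q + b), ⟨(p, a), (q, b)⟩⟩)
      (fun ⟨⟨_, _⟩, ⟨⟨p, a⟩, ⟨q, b⟩⟩⟩ ↦ ⟨(p + q, a + b), ⟨(a, b), (p, q)⟩⟩) <;>
      aesop (add simp [add_assoc, add_left_comm])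
  · simpa only [← coeff_applyEnd_C, ← map_mul, coeff_mul] using congrArg (coeff n) (h (C u) (C w))

theorem IsHasseSchmidt.of_mul_eq_one {φ ψ : (Module.End R A)⟦X⟧} (hφ : IsHasseSchmidt φ)
    (hφψ : φ * ψ = 1) (hψφ : ψ * φ = 1) : IsHasseSchmidt ψ := by
  have cancel_left (x : A⟦X⟧) : applyEnd ψ (applyEnd φ x) = x := by
    rw [applyEnd_applyEnd, hψφ, applyEnd_one]
  have cancel_right (x : A⟦X⟧) : applyEnd φ (applyEnd ψ x) = x := by
    rw [applyEnd_applyEnd, hφψ, applyEnd_one]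
  refine isHasseSchmidt_iff_applyEnd_mul.2 fun x y ↦ ?_
  calc applyEnd ψ (x * y)
      = applyEnd ψ (applyEnd φ (applyEnd ψ x) * applyEnd φ (applyEnd ψ y)) := by
        rw [cancel_right, cancel_right]
    _ = applyEnd ψ x * applyEnd ψ y := by
        rw [← isHasseSchmidt_iff_applyEnd_mul.1 hφ, cancel_left]

end PowerSeries

open PowerSeries

theorem isHS_coeff_iff {M : Type*} [AddCommGroup M] [Module ℤ M]
    (φ : (Module.End ℤ (ExteriorAlgebra ℤ M))⟦X⟧) :
    IsHS (fun n ↦ coeff n φ) ↔ IsHasseSchmidt φ := by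
  simp only [IsHS, IsHasseSchmidt, Nat.sum_antidiagonal_eq_sum_range_succ_mk]

theorem stmt0_general {M : Type*} [AddCommGroup M] [Module ℤ M]
    (D : ℕ → Module.End ℤ (ExteriorAlgebra ℤ M)) (hD : IsHS D) (h0 : D 0 = 1) :
    ∃ E : ℕ → Module.End ℤ (ExteriorAlgebra ℤ M), IsHS E ∧
      (∀ n : ℕ, (∑ j ∈ Finset.range (n + 1), D j * E (n - j)) =
        if n = 0 then 1 else 0) ∧
      (∀ n : ℕ, (∑ j ∈ Finset.range (n + 1), E j * D (n - j)) =
        if n = 0 then 1 else 0) := by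
  set ψ := invOfUnit (PowerSeries.mk D) 1
  have hDψ : PowerSeries.mk D * ψ = 1 := mul_invOfUnit _ _ (by simp [h0])
  have hψD : ψ * PowerSeries.mk D = 1 := invOfUnit_mul _ _ (by simp [h0])
  refine ⟨fun n ↦ coeff n ψ, ?_, fun n ↦ ?_, fun n ↦ ?_⟩
  · have hDHS : IsHasseSchmidt (PowerSeries.mk D) := by
      simpa only [← isHS_coeff_iff, coeff_mk] using hD
    exact (isHS_coeff_iff ψ).2 (hDHS.of_mul_eq_one hDψ hψD)
  · simpa [coeff_mul_eq_sum_range, coeff_one] using congrArg (coeff n) hDψ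
  · simpa [coeff_mul_eq_sum_range, coeff_one] using congrArg (coeff n) hψD

/-- If `D(z)` is a Hasse–Schmidt derivation on `⋀M` with `D₀ = id`, then its formal
inverse in `End(⋀M)[[z]]` (with respect to the Cauchy product) exists and is again a
Hasse–Schmidt derivation. -/
theorem stmt0 {M : Type*} [AddCommGroup M] [Module ℤ M] [Module.Free ℤ M]
    (D : ℕ → Module.End ℤ (ExteriorAlgebra ℤ M)) (hD : IsHS D) (h0 : D 0 = 1) :
    ∃ E : ℕ → Module.End ℤ (ExteriorAlgebra ℤ M), IsHS E ∧
      (∀ n : ℕ, (∑ j ∈ Finset.range (n + 1), D j * E (n - j)) =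
        if n = 0 then 1 else 0) ∧
      (∀ n : ℕ, (∑ j ∈ Finset.range (n + 1), E j * D (n - j)) =
        if n = 0 then 1 else 0) :=
  stmt0_general D hD h0
end
end

section
/- Let D(z) be a Hasse–Schmidt derivation on ⋀M with D_0 = id and inverse D̄(z). Then for all u, v ∈ ⋀M: u ∧ D̄(z)v = D̄(z)(D(z)u ∧ v). -/
/-! In `End(⋀M)[[z]]`, write `L_u(z) = ∑ (D_j u ∧ ·) z^j`. The Leibniz rule for `D(z)` says
`D(z) ∘ (u ∧ ·) = L_u(z) ∘ D(z)`, i.e. `D(z)` semiconjugates left multiplication by `u` to `L_u(z)`.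
Since `D(z)` is a unit with inverse `D̄(z)`, this gives `(u ∧ ·) ∘ D̄(z) = D̄(z) ∘ L_u(z)`, whose
coefficient of `z^n`, evaluated at `v`, is the theorem. -/

noncomputable section

namespace PowerSeries

variable {R : Type*} [Semiring R]

theorem coeff_mk_mul_mk (f g : ℕ → R) (n : ℕ) :
    coeff n (mk f * mk g) = ∑ j ∈ Finset.range (n + 1), f j * g (n - j) := by
  rw [coeff_mul, Finset.Nat.sum_antidiagonal_eq_sum_range_succ_mk]
  simp only [coeff_mk]

theorem mk_mul_mk_eq_one {f g : ℕ → R}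
    (h : ∀ n, ∑ j ∈ Finset.range (n + 1), f j * g (n - j) = if n = 0 then 1 else 0) :
    mk f * mk g = 1 := by
  ext n
  rw [coeff_mk_mul_mk, h, coeff_one]

end PowerSeries

open PowerSeries

section HasseSchmidt

variable {M : Type*} [AddCommGroup M] [Module ℤ M]

def mulLeftSeries (D : ℕ → Module.End ℤ (ExteriorAlgebra ℤ M)) (u : ExteriorAlgebra ℤ M) :
    PowerSeries (Module.End ℤ (ExteriorAlgebra ℤ M)) :=
  mk fun j => LinearMap.mulLeft ℤ (D j u)

theorem IsHS.semiconjBy_mulLeft {D : ℕ → Module.End ℤ (ExteriorAlgebra ℤ M)} (hD : IsHS D)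
    (u : ExteriorAlgebra ℤ M) :
    SemiconjBy (mk D) (C (LinearMap.mulLeft ℤ u)) (mulLeftSeries D u) := by
  ext n : 1
  refine LinearMap.ext fun w => ?_
  rw [coeff_mul_C, mulLeftSeries, coeff_mk_mul_mk]
  simpa only [coeff_mk, Module.End.mul_apply, LinearMap.mulLeft_apply, LinearMap.sum_apply]
    using hD n u w

end HasseSchmidt

theorem stmt2_general {M : Type*} [AddCommGroup M] [Module ℤ M]
    (D E : ℕ → Module.End ℤ (ExteriorAlgebra ℤ M)) (hD : IsHS D)
    (hInv₁ : ∀ n : ℕ, (∑ j ∈ Finset.range (n + 1), D j * E (n - j)) =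
      if n = 0 then 1 else 0)
    (hInv₂ : ∀ n : ℕ, (∑ j ∈ Finset.range (n + 1), E j * D (n - j)) =
      if n = 0 then 1 else 0) :
    ∀ (n : ℕ) (u v : ExteriorAlgebra ℤ M),
      u * E n v = ∑ j ∈ Finset.range (n + 1), E j (D (n - j) u * v) := by
  intro n u v
  let unitD : (PowerSeries (Module.End ℤ (ExteriorAlgebra ℤ M)))ˣ :=
    ⟨mk D, mk E, mk_mul_mk_eq_one hInv₁, mk_mul_mk_eq_one hInv₂⟩
  have hconj : mk E * mulLeftSeries D u = C (LinearMap.mulLeft ℤ u) * mk E :=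
    SemiconjBy.units_inv_symm_left (a := unitD) (hD.semiconjBy_mulLeft u)
  have hcoeff := congrArg
    (fun f : PowerSeries (Module.End ℤ (ExteriorAlgebra ℤ M)) => coeff n f v) hconj
  simp only [mulLeftSeries, coeff_mk_mul_mk, coeff_C_mul, coeff_mk, LinearMap.sum_apply,
    Module.End.mul_apply, LinearMap.mulLeft_apply] at hcoeff
  exact hcoeff.symm

/-- Integration by parts: if `D(z)` is a Hasse–Schmidt derivation on `⋀M` with `D₀ = id`
and `D̄(z) = E` is its formal inverse in `End(⋀M)[[z]]`, then
`u ∧ D̄(z)v = D̄(z)(D(z)u ∧ v)`, stated coefficientwise in `z^n`. -/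
theorem stmt2 {M : Type*} [AddCommGroup M] [Module ℤ M] [Module.Free ℤ M]
    (D E : ℕ → Module.End ℤ (ExteriorAlgebra ℤ M)) (hD : IsHS D) (h0 : D 0 = 1)
    (hInv₁ : ∀ n : ℕ, (∑ j ∈ Finset.range (n + 1), D j * E (n - j)) =
      if n = 0 then 1 else 0)
    (hInv₂ : ∀ n : ℕ, (∑ j ∈ Finset.range (n + 1), E j * D (n - j)) =
      if n = 0 then 1 else 0) :
    ∀ (n : ℕ) (u v : ExteriorAlgebra ℤ M),
      u * E n v = ∑ j ∈ Finset.range (n + 1), E j (D (n - j) u * v) :=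
  stmt2_general D E hD hInv₁ hInv₂
end
end

section
/- Let σ_i ∈ End_ℤ(⋀M) (i ∈ ℤ) be the coefficients of the Schubert derivations, determined by σ_i b_k = b_{k+i} and the Hasse–Schmidt/Leibniz property. Then σ_i and σ_j commute on all of ⋀M: σ_i σ_j = σ_j σ_i for all i, j ∈ ℤ. -/
open ExteriorAlgebra

noncomputable section

abbrev M : Type := ℤ →₀ ℤ
def b (i : ℤ) : M := Finsupp.single i 1
abbrev A : Type := ExteriorAlgebra ℤ M

/-!
Every `σᵢ` satisfies a Leibniz rule `σᵢ (u * w) = ∑ σₐ u * σ_c w` over a finite set of pairs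
`(a, c)`. Expanding `σᵢ σⱼ (u * w)` with both rules gives a double sum which, once `σᵢ` and
`σⱼ` commute on `u` and on `w`, is symmetric in `i` and `j` up to exchanging the order of
summation. So the elements on which all the `σᵢ` commute form a subalgebra. It contains `1`,
because the Leibniz rule applied to `1 = 1 * 1` forces `σᵢ 1 = 0` for `i ≠ 0`, and the
generators, since `σᵢ σⱼ bₖ = b_{k+i+j}`; therefore it is all of `⋀M`.
-/

open Finset

theorem sum_range_succ_natCast_sub_eq_sum_antidiagonal {β : Type*} [AddCommMonoid β]
    (f : ℤ → ℤ → β) (n : ℕ) :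
    ∑ j ∈ range (n + 1), f j (n - j) = ∑ p ∈ antidiagonal n, f p.1 p.2 := by
  rw [Nat.sum_antidiagonal_eq_sum_range_succ (fun a c => f a c)]
  exact sum_congr rfl fun j hj => by rw [Nat.cast_sub (Nat.lt_succ_iff.mp (mem_range.mp hj))]

theorem mul_comm_of_map_mul_eq_sum {κ R B : Type*} [CommSemiring R] [Semiring B] [Algebra R B]
    (S : κ → Module.End R B)
    (hmul : ∀ i, ∃ P : Finset (κ × κ), ∀ u w, S i (u * w) = ∑ p ∈ P, S p.1 u * S p.2 w)
    {s : Set B} (hs : Algebra.adjoin R s = ⊤)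
    (hgen : ∀ i j, ∀ x ∈ s, S i (S j x) = S j (S i x))
    (hone : ∀ i j, S i (S j 1) = S j (S i 1)) (i j : κ) :
    S i * S j = S j * S i := by
  choose P hP using hmul
  suffices h : ∀ x ∈ Algebra.adjoin R s, ∀ i j, S i (S j x) = S j (S i x) from
    LinearMap.ext fun x => h x (hs ▸ Algebra.mem_top) i j
  intro x hx
  induction hx using Algebra.adjoin_induction with
  | mem x hx => exact fun i j => hgen i j x hx
  | algebraMap r => intro i j; simp only [Algebra.algebraMap_eq_smul_one, map_smul, hone]
  | add x y _ _ hx hy => intro i j; simp only [map_add, hx, hy]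
  | mul u w _ _ hu hw =>
    intro i j
    calc S i (S j (u * w))
        = ∑ q ∈ P j, ∑ p ∈ P i, S p.1 (S q.1 u) * S p.2 (S q.2 w) := by simp only [hP, map_sum]
      _ = ∑ p ∈ P i, ∑ q ∈ P j, S q.1 (S p.1 u) * S q.2 (S p.2 w) :=
        sum_comm.trans <| sum_congr rfl fun _ _ => sum_congr rfl fun _ _ => by rw [hu, hw]
      _ = S j (S i (u * w)) := by simp only [hP, map_sum]

theorem exists_map_mul_eq_sum_of_antidiagonal {R B : Type*} [Semiring R] [Semiring B]
    [Module R B] (S : ℤ → Module.End R B)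
    (hplus : ∀ (n : ℕ) u w, S n (u * w) = ∑ p ∈ antidiagonal n, S p.1 u * S p.2 w)
    (hminus : ∀ (n : ℕ) u w, S (-n) (u * w) = ∑ p ∈ antidiagonal n, S (-p.1) u * S (-p.2) w)
    (i : ℤ) : ∃ P : Finset (ℤ × ℤ), ∀ u w, S i (u * w) = ∑ p ∈ P, S p.1 u * S p.2 w := by
  obtain ⟨n, rfl | rfl⟩ := i.eq_nat_or_neg
  · exact ⟨(antidiagonal n).map (Nat.castEmbedding.prodMap Nat.castEmbedding),
      fun u w => by simpa using hplus n u w⟩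
  · let φ : ℕ ↪ ℤ := Nat.castEmbedding.trans (Equiv.neg ℤ).toEmbedding
    exact ⟨(antidiagonal n).map (φ.prodMap φ), fun u w => by simpa [φ] using hminus n u w⟩

section ApplyOne

variable {R B : Type*} [Semiring R] [Ring B] [Module R B]

theorem apply_one_eq_zero_of_map_mul_eq_sum_antidiagonal (T : ℕ → Module.End R B)
    (h0 : T 0 = 1) (hmul : ∀ n u w, T n (u * w) = ∑ p ∈ antidiagonal n, T p.1 u * T p.2 w)
    (n : ℕ) : T (n + 1) 1 = 0 := by
  induction n using Nat.strong_induction_on with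
  | _ n ih =>
    have hlast : ∑ p ∈ antidiagonal n, T (p.1 + 1) 1 * T p.2 1 = T (n + 1) 1 * T 0 1 := by
      refine sum_eq_single (n, 0) (fun p hp hne => ?_) (by simp)
      have hp1 : p.1 < n := by
        rw [HasAntidiagonal.mem_antidiagonal] at hp
        rcases p with ⟨p1, _ | p2⟩
        · exact absurd (by simpa using hp) hne
        · omega
      rw [ih p.1 hp1, zero_mul]
    -- The middle terms vanish, so `T (n+1) 1 = T (n+1) (1 * 1)` expands to `2 • T (n+1) 1`.
    have h := hmul (n + 1) 1 1
    rw [one_mul, Nat.sum_antidiagonal_succ, hlast, h0] at h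
    simpa using h

theorem apply_one_eq_zero_of_ne_zero (S : ℤ → Module.End R B) (h0 : S 0 = 1)
    (hplus : ∀ (n : ℕ) u w, S n (u * w) = ∑ p ∈ antidiagonal n, S p.1 u * S p.2 w)
    (hminus : ∀ (n : ℕ) u w, S (-n) (u * w) = ∑ p ∈ antidiagonal n, S (-p.1) u * S (-p.2) w)
    {i : ℤ} (hi : i ≠ 0) : S i 1 = 0 := by
  obtain ⟨n, rfl | rfl⟩ := i.eq_nat_or_neg <;> obtain _ | n := n
  · exact absurd rfl hi
  · exact_mod_cast apply_one_eq_zero_of_map_mul_eq_sum_antidiagonal (fun n => S n) h0 hplus n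
  · exact absurd neg_zero hi
  · exact_mod_cast apply_one_eq_zero_of_map_mul_eq_sum_antidiagonal (fun n => S (-n))
      (by simpa using h0) hminus n

end ApplyOne

theorem apply_apply_ι_comm (S : ℤ → Module.End ℤ A)
    (hb : ∀ i k : ℤ, S i (ι ℤ (b k)) = ι ℤ (b (k + i))) (i j : ℤ) (m : M) :
    S i (S j (ι ℤ m)) = S j (S i (ι ℤ m)) := by
  change ((S i * S j) ∘ₗ ι ℤ) m = ((S j * S i) ∘ₗ ι ℤ) m
  congr 1
  ext k
  simp only [LinearMap.coe_comp, Function.comp_apply, Finsupp.lsingle_apply, Module.End.mul_apply]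
  rw [← b, hb, hb, hb, hb, add_right_comm]

/-- The coefficients `σᵢ` (`i ∈ ℤ`) of the Schubert derivations `σ₊(z)` and `σ₋(z)`
on `⋀M`, determined by `σᵢ bₖ = b_{k+i}`, `σ₀ = id` and the Hasse–Schmidt/Leibniz
property in each direction, commute pairwise on all of `⋀M`. -/
theorem stmt5 (S : ℤ → Module.End ℤ A)
    (h0 : S 0 = 1)
    (hb : ∀ i k : ℤ, S i (ι ℤ (b k)) = ι ℤ (b (k + i)))
    (hplus : ∀ (i : ℕ) (u w : A),
      S i (u * w) = ∑ j ∈ Finset.range (i + 1), S j u * S ((i : ℤ) - j) w)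
    (hminus : ∀ (i : ℕ) (u w : A),
      S (-(i : ℤ)) (u * w) =
        ∑ j ∈ Finset.range (i + 1), S (-(j : ℤ)) u * S (-((i : ℤ) - j)) w) :
    ∀ i j : ℤ, S i * S j = S j * S i := by
  have hplus' : ∀ (n : ℕ) (u w : A), S n (u * w) = ∑ p ∈ antidiagonal n, S p.1 u * S p.2 w :=
    fun n u w => (hplus n u w).trans <|
      sum_range_succ_natCast_sub_eq_sum_antidiagonal (fun a c => S a u * S c w) n
  have hminus' : ∀ (n : ℕ) (u w : A),
      S (-n) (u * w) = ∑ p ∈ antidiagonal n, S (-p.1) u * S (-p.2) w :=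
    fun n u w => (hminus n u w).trans <|
      sum_range_succ_natCast_sub_eq_sum_antidiagonal (fun a c => S (-a) u * S (-c) w) n
  have hone : ∀ i j, S i (S j 1) = S j (S i 1) := by
    intro i j
    rcases eq_or_ne i 0 with rfl | hi
    · rw [h0]; rfl
    rcases eq_or_ne j 0 with rfl | hj
    · rw [h0]; rfl
    rw [apply_one_eq_zero_of_ne_zero S h0 hplus' hminus' hi,
      apply_one_eq_zero_of_ne_zero S h0 hplus' hminus' hj, map_zero, map_zero]
  exact mul_comm_of_map_mul_eq_sum S (exists_map_mul_eq_sum_of_antidiagonal S hplus' hminus')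
    CliffordAlgebra.adjoin_range_ι (by rintro i j _ ⟨m, rfl⟩; exact apply_apply_ι_comm S hb i j m)
    hone
end
end

section
/- The maps σ̄_-(z), σ_-(z): B → B[z^{-1}] defined by σ̄_-(z)h_n = h_n − h_{n−1}z^{−1} and σ_-(z)h_n = Σ_{0≤j≤n} h_{n−j}z^{−j} and extended via Schur determinants (σ_-(z)Δ_λ(H) := Δ_λ(σ_-(z)H)) are ring homomorphisms. -/
noncomputable section

/-- `B = ℤ[e₁, e₂, …]`, with `e_{n+1} := X n`. -/
abbrev B : Type := MvPolynomial ℕ ℤ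

/-- `e_j` for `j ≥ 1`. -/
def e (j : ℕ) : B := MvPolynomial.X (j - 1)

/-- The complete homogeneous symmetric functions `h_n`, defined by
`H(z)E(z) = 1` where `E(z) = 1 + ∑_{j≥1} (−1)^j e_j z^j`, i.e.
`h_n = ∑_{j=1}^n (−1)^{j+1} e_j h_{n−j}`, `h_0 = 1`. -/
def h : ℕ → B
  | 0 => 1
  | n + 1 => ∑ j ∈ Finset.range (n + 1), (-1 : B) ^ j * e (j + 1) * h (n - j)
  decreasing_by exact Nat.lt_succ_of_le (Nat.sub_le n j)

/-- `h` extended to `ℤ` by `h_k = 0` for `k < 0`. -/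
def hz (k : ℤ) : B := if 0 ≤ k then h k.toNat else 0

/-- The Schur polynomial `Δ_λ(H) = det(h_{λⱼ−j+i})_{1≤i,j≤r}` (0-indexed). -/
def SchurD (r : ℕ) (lam : Fin r → ℕ) : B :=
  Matrix.det (Matrix.of fun i j : Fin r =>
    hz (((lam j : ℕ) : ℤ) - ((j : ℕ) : ℤ) + ((i : ℕ) : ℤ)))

/-!
Expanding the Jacobi–Trudi determinant `Δ_λ(H)` of a partition `λ` of length `r` over permutations,
the diagonal term is `h_λ = ∏ h_{λ_i}`, and every other term either vanishes or is a product
`h_ν` with `|ν| = |λ|` and strictly larger weight `∑ (r+1)^{ν_i}`: if `k` is the first index moved by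
the permutation, `ν_k > λ_k` dominates all the `λ_i` with `i ≥ k`. A map `φ` compatible with these
determinants is therefore multiplicative on every monomial `h_μ`, by downward induction on the weight,
which is bounded by `(r+1)^{|μ|+1}`. The `h_n` generate `B`, so the monomials span it and `φ` is
multiplicative.
-/

open Finset

theorem LinearMap.map_mul_of_span_eq_top {K A R : Type*} [CommSemiring K] [Semiring A]
    [Algebra K A] [Semiring R] [Algebra K R] (f : A →ₗ[K] R) {S : Set A}
    (hS : Submodule.span K S = ⊤) (hmul : ∀ x ∈ S, ∀ y ∈ S, f (x * y) = f x * f y)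
    (a b : A) : f (a * b) = f a * f b := by
  have : (LinearMap.mul K A).compr₂ f = (LinearMap.mul K R).compl₁₂ f f :=
    LinearMap.ext_on hS fun x hx => LinearMap.ext_on hS fun y hy => hmul x hx y hy
  exact LinearMap.congr_fun₂ this a b

theorem map_prod_diag_of_map_det {A R F n : Type*} [CommRing A] [CommRing R]
    [FunLike F A R] [AddMonoidHomClass F A R] [Fintype n] [DecidableEq n] (f : F)
    (M : Matrix n n A)
    (hdet : f M.det = (M.map f).det)
    (hoff : ∀ σ : Equiv.Perm n, σ ≠ 1 → f (∏ i, M (σ i) i) = ∏ i, f (M (σ i) i)) :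
    f (∏ i, M i i) = ∏ i, f (M i i) := by
  set g : Equiv.Perm n → R := fun σ =>
    Equiv.Perm.sign σ • (f (∏ i, M (σ i) i) - ∏ i, f (M (σ i) i))
  have hsum : ∑ σ, g σ = 0 := by
    simp only [g, smul_sub, sum_sub_distrib, sub_eq_zero]
    rw [Matrix.det_apply, Matrix.det_apply, map_sum] at hdet
    simpa only [Units.smul_def, map_zsmul, Matrix.map_apply] using hdet
  have hg1 : g 1 = 0 :=
    (Fintype.sum_eq_single 1 fun σ hσ => by simp [g, hoff σ hσ]).symm.trans hsum
  simpa [g, sub_eq_zero] using hg1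

theorem prod_comp_append {α M : Type*} [CommMonoid M] (f : α → M) {r s : ℕ} (μ : Fin r → α)
    (ν : Fin s → α) : ∏ i, f (Fin.append μ ν i) = (∏ i, f (μ i)) * ∏ i, f (ν i) := by
  simp [Fin.prod_univ_add]

theorem sum_pow_lt_pow_succ {r m : ℕ} (s : Finset (Fin r)) (ν : Fin r → ℕ)
    (hν : ∀ i ∈ s, ν i ≤ m) : ∑ i ∈ s, (r + 1) ^ ν i < (r + 1) ^ (m + 1) :=
  calc ∑ i ∈ s, (r + 1) ^ ν i ≤ #s • (r + 1) ^ m :=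
        sum_le_card_nsmul _ _ _ fun i hi => Nat.pow_le_pow_right r.succ_pos (hν i hi)
    _ ≤ r * (r + 1) ^ m := by
        rw [smul_eq_mul]
        exact Nat.mul_le_mul_right _ ((card_le_univ s).trans_eq (Fintype.card_fin r))
    _ < (r + 1) ^ (m + 1) := by
        rw [pow_succ']; exact Nat.mul_lt_mul_of_pos_right r.lt_succ_self (by positivity)

theorem exists_antitone_comp_perm {α : Type*} [LinearOrder α] {r : ℕ} (μ : Fin r → α) :
    ∃ τ : Equiv.Perm (Fin r), Antitone (μ ∘ τ) :=
  ⟨Fin.revPerm.trans (Tuple.sort μ), fun _ _ hij => Tuple.monotone_sort μ (Fin.rev_le_rev.mpr hij)⟩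

theorem sum_pow_lt_sum_pow_of_shift_perm {r : ℕ} {lam ν : Fin r → ℕ} (hlam : Antitone lam)
    {σ : Equiv.Perm (Fin r)} (hσ : σ ≠ 1) (hν : ∀ i, (ν i : ℤ) = lam i - i + σ i) :
    ∑ i, (r + 1) ^ lam i < ∑ i, (r + 1) ^ ν i := by
  obtain ⟨k, hk, hmin⟩ := wellFounded_lt.has_min {i | σ i ≠ i} <| by
    by_contra! h
    exact hσ (Equiv.ext fun i => by simpa using Set.eq_empty_iff_forall_notMem.1 h i)
  have hfix : ∀ i < k, σ i = i := fun i hi => by_contra fun h => hmin i h hi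
  have hk_lt : k < σ k :=
    (lt_or_gt_of_ne hk).resolve_left fun h => hk (σ.injective (hfix _ h))
  have hν_fix : ∀ i < k, ν i = lam i := fun i hi => by
    have := hν i
    rw [hfix i hi] at this
    omega
  have hν_k : lam k + 1 ≤ ν k := by
    have := hν k
    have : (k : ℕ) < σ k := hk_lt
    omega
  have hlow : ∑ i ∈ univ with i < k, (r + 1) ^ ν i = ∑ i ∈ univ with i < k, (r + 1) ^ lam i :=
    sum_congr rfl fun i hi => by rw [hν_fix i (mem_filter.1 hi).2]
  rw [← sum_filter_add_sum_filter_not univ (· < k),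
    ← sum_filter_add_sum_filter_not univ (· < k) (fun i => (r + 1) ^ ν i), hlow]
  refine Nat.add_lt_add_left ?_ _
  calc ∑ i ∈ univ with ¬ i < k, (r + 1) ^ lam i < (r + 1) ^ (lam k + 1) :=
        sum_pow_lt_pow_succ _ _ fun i hi => hlam (not_lt.1 (mem_filter.1 hi).2)
    _ ≤ (r + 1) ^ ν k := Nat.pow_le_pow_right r.succ_pos hν_k
    _ ≤ ∑ i ∈ univ with ¬ i < k, (r + 1) ^ ν i :=
        single_le_sum (f := fun i => (r + 1) ^ ν i) (fun _ _ => Nat.zero_le _)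
          (mem_filter.2 ⟨mem_univ k, lt_irrefl k⟩)

theorem sum_eq_sum_of_shift_perm {r : ℕ} {lam ν : Fin r → ℕ} (σ : Equiv.Perm (Fin r))
    (hν : ∀ i, (ν i : ℤ) = lam i - i + σ i) : ∑ i, ν i = ∑ i, lam i := by
  have : ∑ i, (ν i : ℤ) = ∑ i, (lam i : ℤ) := by
    simp only [hν, sum_add_distrib, sum_sub_distrib,
      Equiv.sum_comp σ (fun i : Fin r => ((i : ℕ) : ℤ)), sub_add_cancel]
  exact_mod_cast this

theorem hz_natCast (n : ℕ) : hz n = h n := by simp [hz]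

theorem hz_of_neg {k : ℤ} (hk : k < 0) : hz k = 0 := if_neg hk.not_ge

theorem e_succ_mem_adjoin_range_h (n : ℕ) : e (n + 1) ∈ Algebra.adjoin ℤ (Set.range h) := by
  induction n using Nat.strong_induction_on with
  | _ n ih =>
  set S := Algebra.adjoin ℤ (Set.range h)
  have h_mem (m : ℕ) : h m ∈ S := Algebra.subset_adjoin ⟨m, rfl⟩
  have hsign : (-1 : B) ^ n ∈ S := pow_mem (neg_mem (one_mem S)) n
  have hrec : (-1 : B) ^ n * e (n + 1) =
      h (n + 1) - ∑ j ∈ range n, (-1) ^ j * e (j + 1) * h (n - j) := by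
    rw [h, sum_range_succ, Nat.sub_self, h, mul_one, add_sub_cancel_left]
  have hsigned : (-1 : B) ^ n * e (n + 1) ∈ S := hrec ▸ sub_mem (h_mem _) (sum_mem fun j hj =>
    mul_mem (mul_mem (pow_mem (neg_mem (one_mem S)) j) (ih j (mem_range.1 hj))) (h_mem _))
  have hsq : (-1 : B) ^ n * ((-1) ^ n * e (n + 1)) = e (n + 1) := by
    rw [← mul_assoc, ← mul_pow, neg_one_mul, neg_neg, one_pow, one_mul]
  exact hsq ▸ mul_mem hsign hsigned

theorem adjoin_range_h : Algebra.adjoin ℤ (Set.range h) = ⊤ := by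
  rw [eq_top_iff, ← MvPolynomial.adjoin_range_X]
  exact Algebra.adjoin_le <| Set.range_subset_iff.2 e_succ_mem_adjoin_range_h

def hMonomials : Submonoid B where
  carrier := {x | ∃ (r : ℕ) (μ : Fin r → ℕ), ∏ i, h (μ i) = x}
  one_mem' := ⟨0, Fin.elim0, by simp⟩
  mul_mem' := by
    rintro _ _ ⟨r, μ, rfl⟩ ⟨s, ν, rfl⟩
    exact ⟨r + s, Fin.append μ ν, prod_comp_append h μ ν⟩

theorem span_hMonomials : Submodule.span ℤ (hMonomials : Set B) = ⊤ := by
  have h_le : Submonoid.closure (Set.range h) ≤ hMonomials := by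
    rw [Submonoid.closure_le]
    rintro _ ⟨n, rfl⟩
    exact ⟨1, fun _ => n, by simp⟩
  rw [eq_top_iff, ← Algebra.top_toSubmodule, ← adjoin_range_h, Algebra.adjoin_eq_span]
  exact Submodule.span_mono h_le

def PreservesSchurD {R : Type*} [CommRing R] (φ : B →ₗ[ℤ] R) : Prop :=
  ∀ (r : ℕ) (lam : Fin r → ℕ), Antitone lam →
    φ (SchurD r lam) = Matrix.det (Matrix.of fun i j : Fin r =>
      φ (hz (((lam j : ℕ) : ℤ) - ((j : ℕ) : ℤ) + ((i : ℕ) : ℤ))))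

namespace PreservesSchurD

variable {R : Type*} [CommRing R] {φ : B →ₗ[ℤ] R}

theorem map_prod_h_of_antitone (hφ : PreservesSchurD φ) {r : ℕ} {lam : Fin r → ℕ}
    (hlam : Antitone lam)
    (ih : ∀ ν : Fin r → ℕ, ∑ i, ν i = ∑ i, lam i → ∑ i, (r + 1) ^ lam i < ∑ i, (r + 1) ^ ν i →
      φ (∏ i, h (ν i)) = ∏ i, φ (h (ν i))) :
    φ (∏ i, h (lam i)) = ∏ i, φ (h (lam i)) := by
  set M : Matrix (Fin r) (Fin r) B := Matrix.of fun i j => hz ((lam j : ℤ) - j + i)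
  have hdiag : ∀ i, M i i = h (lam i) := fun i => by simp [M, hz_natCast]
  have key := map_prod_diag_of_map_det φ M (hφ r lam hlam) fun σ hσ => ?_
  · simpa [hdiag] using key
  by_cases hpos : ∀ i, 0 ≤ (lam i : ℤ) - i + σ i
  · set ν : Fin r → ℕ := fun i => ((lam i : ℤ) - i + σ i).toNat
    have hν : ∀ i, (ν i : ℤ) = lam i - i + σ i := fun i => Int.toNat_of_nonneg (hpos i)
    have hM : ∀ i, M (σ i) i = h (ν i) := fun i => by simp [M, ← hν, hz_natCast]
    simpa only [hM] using
      ih ν (sum_eq_sum_of_shift_perm σ hν) (sum_pow_lt_sum_pow_of_shift_perm hlam hσ hν)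
  · obtain ⟨i, hi⟩ := not_forall.1 hpos
    have hMi : M (σ i) i = 0 := hz_of_neg (not_le.1 hi)
    rw [prod_eq_zero (f := fun j => M (σ j) j) (mem_univ i) hMi, map_zero,
      prod_eq_zero (f := fun j => φ (M (σ j) j)) (mem_univ i) (by rw [hMi, map_zero])]

theorem map_prod_h (hφ : PreservesSchurD φ) {r : ℕ} (μ : Fin r → ℕ) :
    φ (∏ i, h (μ i)) = ∏ i, φ (h (μ i)) := by
  obtain ⟨τ, hτ⟩ := exists_antitone_comp_perm μ
  rw [← Equiv.prod_comp τ, ← Equiv.prod_comp τ (fun i => φ (h (μ i)))]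
  exact hφ.map_prod_h_of_antitone hτ fun ν _ _ => hφ.map_prod_h ν
termination_by (r + 1) ^ (∑ i, μ i + 1) - ∑ i, (r + 1) ^ μ i
decreasing_by
  rename_i hsum hlt
  simp only [Equiv.sum_comp τ μ, Equiv.sum_comp τ (fun i => (r + 1) ^ μ i)] at hsum hlt
  rw [hsum]
  exact Nat.sub_lt_sub_left
    (sum_pow_lt_pow_succ _ _ fun i _ => single_le_sum (fun _ _ => Nat.zero_le _) (mem_univ i)) hlt

theorem map_mul (hφ : PreservesSchurD φ) (a b : B) : φ (a * b) = φ a * φ b := by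
  refine φ.map_mul_of_span_eq_top span_hMonomials ?_ a b
  rintro _ ⟨r, μ, rfl⟩ _ ⟨s, ν, rfl⟩
  rw [← prod_comp_append h, hφ.map_prod_h, hφ.map_prod_h, hφ.map_prod_h,
    prod_comp_append (fun n => φ (h n))]

theorem map_one (hφ : PreservesSchurD φ) : φ 1 = 1 := by
  simpa [SchurD] using hφ 0 Fin.elim0 fun i => i.elim0

end PreservesSchurD

theorem stmt17_general (φ ψ : B →ₗ[ℤ] Polynomial B)
    (hφΔ : ∀ (r : ℕ) (lam : Fin r → ℕ), Antitone lam →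
      φ (SchurD r lam) =
        Matrix.det (Matrix.of fun i j : Fin r =>
          φ (hz (((lam j : ℕ) : ℤ) - ((j : ℕ) : ℤ) + ((i : ℕ) : ℤ)))))
    (hψΔ : ∀ (r : ℕ) (lam : Fin r → ℕ), Antitone lam →
      ψ (SchurD r lam) =
        Matrix.det (Matrix.of fun i j : Fin r =>
          ψ (hz (((lam j : ℕ) : ℤ) - ((j : ℕ) : ℤ) + ((i : ℕ) : ℤ))))) :
    (∀ a b : B, φ (a * b) = φ a * φ b) ∧ φ 1 = 1 ∧
    (∀ a b : B, ψ (a * b) = ψ a * ψ b) ∧ ψ 1 = 1 :=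
  ⟨PreservesSchurD.map_mul hφΔ, PreservesSchurD.map_one hφΔ,
    PreservesSchurD.map_mul hψΔ, PreservesSchurD.map_one hψΔ⟩

/-- The maps `σ̄₋(z), σ₋(z) : B → B[z⁻¹]` defined on the `h_n` by
`σ̄₋(z)h_n = h_n − h_{n−1}z⁻¹`, `σ₋(z)h_n = ∑_{0≤j≤n} h_{n−j}z^{−j}` and extended
ℤ-linearly via Schur determinants (`σ₋(z)Δ_λ(H) := Δ_λ(σ₋(z)H)`) are ring
homomorphisms. -/
theorem stmt17 (φ ψ : B →ₗ[ℤ] Polynomial B)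
    (hφh : ∀ n : ℕ, φ (h n) =
      Polynomial.C (h n) - Polynomial.C (hz ((n : ℤ) - 1)) * Polynomial.X)
    (hψh : ∀ n : ℕ, ψ (h n) =
      ∑ j ∈ Finset.range (n + 1), Polynomial.C (h (n - j)) * Polynomial.X ^ j)
    (hφΔ : ∀ (r : ℕ) (lam : Fin r → ℕ), Antitone lam →
      φ (SchurD r lam) =
        Matrix.det (Matrix.of fun i j : Fin r =>
          φ (hz (((lam j : ℕ) : ℤ) - ((j : ℕ) : ℤ) + ((i : ℕ) : ℤ)))))
    (hψΔ : ∀ (r : ℕ) (lam : Fin r → ℕ), Antitone lam →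
      ψ (SchurD r lam) =
        Matrix.det (Matrix.of fun i j : Fin r =>
          ψ (hz (((lam j : ℕ) : ℤ) - ((j : ℕ) : ℤ) + ((i : ℕ) : ℤ))))) :
    (∀ a b : B, φ (a * b) = φ a * φ b) ∧ φ 1 = 1 ∧
    (∀ a b : B, ψ (a * b) = ψ a * ψ b) ∧ ψ 1 = 1 :=
  stmt17_general φ ψ hφΔ hψΔ
end
end
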